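/- Let X be a real normed vector space, T > 0, θ ∈ (0, 1], c > 0 and E⁎ ∈ ℝ. Let E : [0, T] → ℝ be continuously differentiable with E(t) > E⁎ for all t ∈ [0, T], and let u : [0, T] → X be continuously differentiable. Assume that −E'(t) ≥ c·‖u'(t)‖·(E(t) − E⁎)^{1−θ} for every t ∈ [0, T]. Then ∫₀^T ‖u'(t)‖ dt ≤ (1/(cθ))·(E(0) − E⁎)^θ, and consequently ‖u(T) − u(0)‖ ≤ (1/(cθ))·(E(0) − E⁎)^θ. -/
import Mathlib

theorem lojasiewicz_simon_trajectory_length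
    {X : Type*} [NormedAddCommGroup X] [NormedSpace ℝ X]
    (T θ c Estar : ℝ) (hT : 0 < T) (hθ : θ ∈ Set.Ioc (0 : ℝ) 1) (hc : 0 < c)
    (E E' : ℝ → ℝ) (u : ℝ → X) (u' : ℝ → X)
    (hE : ∀ t ∈ Set.Icc 0 T, HasDerivAt E (E' t) t)
    (hE'cont : ContinuousOn E' (Set.Icc 0 T))
    (hu : ∀ t ∈ Set.Icc 0 T, HasDerivAt u (u' t) t)
    (hu'cont : ContinuousOn u' (Set.Icc 0 T))
    (hEgt : ∀ t ∈ Set.Icc 0 T, Estar < E t)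
    (hineq : ∀ t ∈ Set.Icc 0 T,
      c * ‖u' t‖ * (E t - Estar) ^ (1 - θ) ≤ -E' t) :
    (∫ t in (0 : ℝ)..T, ‖u' t‖) ≤ (1 / (c * θ)) * (E 0 - Estar) ^ θ ∧
    ‖u T - u 0‖ ≤ (1 / (c * θ)) * (E 0 - Estar) ^ θ := by
  obtain ⟨hθ0, hθ1⟩ := hθ
  have hEc : ContinuousOn E (Set.Icc 0 T) := fun t ht =>
    (hE t ht).continuousAt.continuousWithinAt
  set F : ℝ → ℝ := fun t => (E t - Estar) ^ θ with hFdef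
  have hApos : ∀ t ∈ Set.Icc 0 T, (0:ℝ) < E t - Estar := fun t ht =>
    sub_pos.mpr (hEgt t ht)
  have hF : ∀ t ∈ Set.Icc 0 T,
      HasDerivAt F (E' t * θ * (E t - Estar) ^ (θ - 1)) t := by
    intro t ht
    exact ((hE t ht).sub_const Estar).rpow_const (Or.inl (hApos t ht).ne')
  -- pointwise inequality
  have key : ∀ t ∈ Set.Icc 0 T,
      c * θ * ‖u' t‖ ≤ -(E' t * θ * (E t - Estar) ^ (θ - 1)) := by
    intro t ht
    have hA := hApos t ht
    have hpow : (0:ℝ) < (E t - Estar) ^ (θ - 1) := Real.rpow_pos_of_pos hA _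
    have h2 : θ * (E t - Estar) ^ (θ - 1) * (c * ‖u' t‖ * (E t - Estar) ^ (1 - θ))
        ≤ θ * (E t - Estar) ^ (θ - 1) * (-E' t) :=
      mul_le_mul_of_nonneg_left (hineq t ht) (by positivity)
    have hcancel : (E t - Estar) ^ (θ - 1) * (E t - Estar) ^ (1 - θ) = 1 := by
      rw [← Real.rpow_add hA]; norm_num
    have hEq : θ * (E t - Estar) ^ (θ - 1) * (c * ‖u' t‖ * (E t - Estar) ^ (1 - θ))
        = c * θ * ‖u' t‖ := by
      calc θ * (E t - Estar) ^ (θ - 1) * (c * ‖u' t‖ * (E t - Estar) ^ (1 - θ))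
          = c * θ * ‖u' t‖ * ((E t - Estar) ^ (θ - 1) * (E t - Estar) ^ (1 - θ)) := by
            ring
        _ = c * θ * ‖u' t‖ := by rw [hcancel, mul_one]
    nlinarith [h2]
  -- integrability
  have hint1 : IntervalIntegrable (fun t => c * θ * ‖u' t‖) MeasureTheory.volume 0 T := by
    apply ContinuousOn.intervalIntegrable
    rw [Set.uIcc_of_le hT.le]
    exact continuousOn_const.mul hu'cont.norm
  have hcontF' : ContinuousOn (fun t => E' t * θ * (E t - Estar) ^ (θ - 1))
      (Set.Icc 0 T) := by
    refine (hE'cont.mul continuousOn_const).mul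
      ((hEc.sub continuousOn_const).rpow_const fun t ht => Or.inl (hApos t ht).ne')
  have hint2 : IntervalIntegrable
      (fun t => -(E' t * θ * (E t - Estar) ^ (θ - 1))) MeasureTheory.volume 0 T := by
    apply ContinuousOn.intervalIntegrable
    rw [Set.uIcc_of_le hT.le]
    exact hcontF'.neg
  have hFTC : (∫ t in (0:ℝ)..T, E' t * θ * (E t - Estar) ^ (θ - 1)) = F T - F 0 := by
    apply intervalIntegral.integral_eq_sub_of_hasDerivAt
    · intro t ht
      rw [Set.uIcc_of_le hT.le] at ht
      exact hF t ht
    · apply ContinuousOn.intervalIntegrable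
      rw [Set.uIcc_of_le hT.le]
      exact hcontF'
  have hmono : (∫ t in (0:ℝ)..T, c * θ * ‖u' t‖)
      ≤ ∫ t in (0:ℝ)..T, -(E' t * θ * (E t - Estar) ^ (θ - 1)) :=
    intervalIntegral.integral_mono_on hT.le hint1 hint2 key
  have hright : (∫ t in (0:ℝ)..T, -(E' t * θ * (E t - Estar) ^ (θ - 1)))
      = F 0 - F T := by
    rw [intervalIntegral.integral_neg, hFTC]; ring
  have hleft : (∫ t in (0:ℝ)..T, c * θ * ‖u' t‖)
      = c * θ * ∫ t in (0:ℝ)..T, ‖u' t‖ := by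
    exact intervalIntegral.integral_const_mul _ _
  have hFT : 0 ≤ F T :=
    (Real.rpow_pos_of_pos (hApos T ⟨hT.le, le_refl T⟩) _).le
  have hcθ : (0:ℝ) < c * θ := mul_pos hc hθ0
  have hI : (∫ t in (0:ℝ)..T, ‖u' t‖) ≤ (1 / (c * θ)) * (E 0 - Estar) ^ θ := by
    have h3 : c * θ * (∫ t in (0:ℝ)..T, ‖u' t‖) ≤ (E 0 - Estar) ^ θ := by
      rw [← hleft]
      calc (∫ t in (0:ℝ)..T, c * θ * ‖u' t‖) ≤ F 0 - F T := hright ▸ hmono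
        _ ≤ F 0 := by linarith
    rw [div_mul_eq_mul_div, one_mul, le_div_iff₀ hcθ]
    linarith [h3]
  refine ⟨hI, ?_⟩
  -- second part via completion
  set ι : X →L[ℝ] UniformSpace.Completion X := UniformSpace.Completion.toComplL
  have hFTCu : (∫ t in (0:ℝ)..T, ι (u' t)) = ι (u T) - ι (u 0) := by
    apply intervalIntegral.integral_eq_sub_of_hasDerivAt
    · intro t ht
      rw [Set.uIcc_of_le hT.le] at ht
      exact (ι.hasFDerivAt.comp_hasDerivAt t (hu t ht))
    · apply ContinuousOn.intervalIntegrable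
      rw [Set.uIcc_of_le hT.le]
      exact ι.continuous.comp_continuousOn hu'cont
  have hnorm : ‖u T - u 0‖ = ‖ι (u T) - ι (u 0)‖ := by
    rw [← map_sub]
    simp [ι, UniformSpace.Completion.coe_toComplL,
      UniformSpace.Completion.norm_coe]
  calc ‖u T - u 0‖ = ‖∫ t in (0:ℝ)..T, ι (u' t)‖ := by rw [hnorm, hFTCu]
    _ ≤ ∫ t in (0:ℝ)..T, ‖ι (u' t)‖ :=
        intervalIntegral.norm_integral_le_integral_norm hT.le
    _ = ∫ t in (0:ℝ)..T, ‖u' t‖ := by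
        apply intervalIntegral.integral_congr
        intro t _
        simp [ι, UniformSpace.Completion.coe_toComplL,
          UniformSpace.Completion.norm_coe]
    _ ≤ (1 / (c * θ)) * (E 0 - Estar) ^ θ := hI
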